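/- arXiv:1708.07296 — 9 statements merged into one kernel-verified Lean document; each statement's English description precedes it below -/
import Mathlib

section
/- Let D, M, T be strictly positive real numbers and let A be the 2×2 real matrix with rows (-D/M, 1/M) and (-T, 0). Then for every initial vector x₀ ∈ ℝ², the solution exp(t•A) applied to x₀ of the linear system ẋ = A x tends to the zero vector as t → ∞ (asymptotic stability of the origin). -/
/-!
Lyapunov's method. Write `A = !![-a, b; -c, 0]` with `a = D/M`, `b = 1/M`, `c = T`. The
positive definite matrix `P = !![2c², -ac; -ac, 2bc + a²]` solves the Lyapunov equation
`Aᵀ P + P A = -Q` with `Q = diag(2ac², 2abc)` positive definite. Along a trajectory `x` the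
quadratic form `V = xᵀ P x` then satisfies `V' = -xᵀ Q x ≤ -κ V` for some `κ > 0` (compare both
forms on the compact unit sphere), so `V` decays exponentially by Grönwall's inequality, and
`V ≥ m ‖x‖²` forces `x → 0`.
-/

open Filter Topology NormedSpace Matrix

section Homogeneous

variable {E : Type*} [NormedAddCommGroup E] [NormedSpace ℝ E] [ProperSpace E]

theorem exists_pos_mul_le_of_sq_homogeneous {f g : E → ℝ} (hf : Continuous f)
    (hg : Continuous g) (hf_smul : ∀ (r : ℝ) x, f (r • x) = r ^ 2 * f x)
    (hg_smul : ∀ (r : ℝ) x, g (r • x) = r ^ 2 * g x) (hf_pos : ∀ x ≠ 0, 0 < f x) :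
    ∃ c > 0, ∀ x, c * g x ≤ f x := by
  have hS : IsCompact (Metric.sphere (0 : E) 1) := isCompact_sphere 0 1
  obtain ⟨q, hq, hfq⟩ := hS.exists_forall_le' hf.continuousOn
    (a := 0) fun x hx => hf_pos x (ne_zero_of_mem_unit_sphere ⟨x, hx⟩)
  obtain ⟨p, hgp⟩ := hS.bddAbove_image hg.continuousOn
  set c := q / (|p| + 1)
  have on_sphere : ∀ u ∈ Metric.sphere (0 : E) 1, c * g u ≤ f u := fun u hu =>
    calc c * g u ≤ c * (|p| + 1) := by
          gcongr; exact (hgp ⟨u, hu, rfl⟩).trans ((le_abs_self p).trans (by linarith))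
      _ = q := div_mul_cancel₀ q (by positivity)
      _ ≤ f u := hfq u hu
  refine ⟨c, by positivity, fun x => ?_⟩
  rcases eq_or_ne x 0 with rfl | hx
  · have hf0 := hf_smul 0 0
    have hg0 := hg_smul 0 0
    simp only [zero_smul, zero_pow two_ne_zero, zero_mul] at hf0 hg0
    simp [hf0, hg0]
  · have hu : ‖x‖⁻¹ • x ∈ Metric.sphere (0 : E) 1 := by simp [norm_smul, hx]
    have hx_eq : x = ‖x‖ • ‖x‖⁻¹ • x := by simp [smul_smul, hx]
    rw [hx_eq, hf_smul, hg_smul, mul_left_comm]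
    exact mul_le_mul_of_nonneg_left (on_sphere _ hu) (by positivity)

end Homogeneous

theorem tendsto_zero_of_hasDerivAt_le_neg_mul {V V' : ℝ → ℝ} {c : ℝ} (hc : 0 < c)
    (hV_nonneg : ∀ t, 0 ≤ V t) (hV : ∀ t, HasDerivAt V (V' t) t)
    (hV' : ∀ t, V' t ≤ -c * V t) : Tendsto V atTop (𝓝 0) := by
  have gronwall : ∀ t, 0 ≤ t → V t ≤ V 0 * Real.exp (-c * t) := fun t ht => by
    have := le_gronwallBound_of_liminf_deriv_right_le (a := 0) (δ := V 0) (K := -c) (ε := 0)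
      (fun s _ => (hV s).continuousAt.continuousWithinAt)
      (fun s _ r hr => by
        simpa [slope_def_field, div_eq_inv_mul] using
          (hV s).hasDerivWithinAt.liminf_right_slope_le hr)
      le_rfl (fun s _ => by simpa using hV' s) t ⟨ht, le_rfl⟩
    simpa [gronwallBound_ε0] using this
  refine squeeze_zero' (.of_forall hV_nonneg) ((eventually_ge_atTop 0).mono gronwall) ?_
  simpa using (Real.tendsto_exp_neg_atTop_nhds_zero.comp
    (tendsto_id.const_mul_atTop hc)).const_mul (V 0)

theorem HasDerivAt.dotProduct {n : Type*} [Fintype n] {x y : ℝ → n → ℝ} {x' y' : n → ℝ}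
    {t : ℝ} (hx : HasDerivAt x x' t) (hy : HasDerivAt y y' t) :
    HasDerivAt (fun s => x s ⬝ᵥ y s) (x' ⬝ᵥ y t + x t ⬝ᵥ y') t := by
  unfold _root_.dotProduct
  rw [← Finset.sum_add_distrib]
  exact HasDerivAt.fun_sum fun i _ => (hasDerivAt_pi.1 hx i).mul (hasDerivAt_pi.1 hy i)

theorem HasDerivAt.mulVec {n : Type*} [Fintype n] [DecidableEq n] {x : ℝ → n → ℝ}
    {x' : n → ℝ} {t : ℝ} (P : Matrix n n ℝ) (hx : HasDerivAt x x' t) :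
    HasDerivAt (fun s => P *ᵥ x s) (P *ᵥ x') t :=
  (toLin' P).toContinuousLinearMap.hasFDerivAt.comp_hasDerivAt t hx

namespace Matrix

variable {n : Type*} [Fintype n]

theorem smul_dotProduct_mulVec_smul (P : Matrix n n ℝ) (r : ℝ) (x : n → ℝ) :
    (r • x) ⬝ᵥ P *ᵥ (r • x) = r ^ 2 * (x ⬝ᵥ P *ᵥ x) := by
  simp only [mulVec_smul, smul_dotProduct, dotProduct_smul, smul_eq_mul]
  ring

theorem continuous_dotProduct_mulVec_self (P : Matrix n n ℝ) :
    Continuous fun x : n → ℝ => x ⬝ᵥ P *ᵥ x := by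
  fun_prop

theorem PosDef.exists_pos_mul_le_dotProduct_mulVec {Q : Matrix n n ℝ} (hQ : Q.PosDef)
    {g : (n → ℝ) → ℝ} (hg : Continuous g) (hg_smul : ∀ (r : ℝ) x, g (r • x) = r ^ 2 * g x) :
    ∃ c > 0, ∀ x, c * g x ≤ x ⬝ᵥ Q *ᵥ x :=
  exists_pos_mul_le_of_sq_homogeneous (continuous_dotProduct_mulVec_self Q) hg
    (smul_dotProduct_mulVec_smul Q) hg_smul fun _ hx => by
      simpa using hQ.dotProduct_mulVec_pos hx

theorem posDef_fin_two_of_pos_of_sq_lt {a b d : ℝ} (ha : 0 < a) (hb : b ^ 2 < a * d) :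
    (!![a, b; b, d]).PosDef := by
  refine posDef_iff_dotProduct_mulVec.2
    ⟨by ext i j; fin_cases i <;> fin_cases j <;> rfl, fun x hx => ?_⟩
  simp only [dotProduct, Pi.star_apply, star_trivial, mulVec, of_apply, cons_val',
    cons_val_fin_one, Fin.sum_univ_two, cons_val_zero, cons_val_one]
  have h_sq : a * (x 0 * (a * x 0 + b * x 1) + x 1 * (b * x 0 + d * x 1)) =
      (a * x 0 + b * x 1) ^ 2 + (a * d - b ^ 2) * x 1 ^ 2 := by ring
  rw [← mul_pos_iff_of_pos_left ha, h_sq]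
  rcases eq_or_ne (x 1) 0 with h1 | h1
  · have h0 : x 0 ≠ 0 := fun h0 => hx (funext fun i => by fin_cases i <;> simp [h0, h1])
    simp only [h1, mul_zero, add_zero, ne_eq, OfNat.ofNat_ne_zero, not_false_eq_true, zero_pow]
    positivity
  · exact add_pos_of_nonneg_of_pos (sq_nonneg _) (mul_pos (sub_pos.2 hb) (by positivity))

variable [DecidableEq n]

theorem hasDerivAt_exp_smul_mulVec (A : Matrix n n ℝ) (x₀ : n → ℝ) (t : ℝ) :
    HasDerivAt (fun s : ℝ => exp (s • A) *ᵥ x₀) (A *ᵥ (exp (t • A) *ᵥ x₀)) t := by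
  -- `exp` does not depend on the norm, so any matrix norm can be used to differentiate it.
  let _ := Matrix.linftyOpNormedRing (n := n) (α := ℝ)
  let _ := Matrix.linftyOpNormedAlgebra (R := ℝ) (n := n) (α := ℝ)
  let evalAt : Matrix n n ℝ →ₗ[ℝ] n → ℝ := LinearMap.applyₗ x₀ ∘ₗ toLin'.toLinearMap
  rw [mulVec_mulVec]
  exact evalAt.toContinuousLinearMap.hasFDerivAt.comp_hasDerivAt t
    (hasDerivAt_exp_smul_const' A t)

theorem tendsto_exp_smul_mulVec_of_lyapunov {A P Q : Matrix n n ℝ} (hP : P.PosDef)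
    (hQ : Q.PosDef) (hAPQ : Aᵀ * P + P * A = -Q) (x₀ : n → ℝ) :
    Tendsto (fun t : ℝ => exp (t • A) *ᵥ x₀) atTop (𝓝 0) := by
  set x := fun t : ℝ => exp (t • A) *ᵥ x₀
  obtain ⟨κ, hκ, hQP⟩ := hQ.exists_pos_mul_le_dotProduct_mulVec
    (continuous_dotProduct_mulVec_self P) (smul_dotProduct_mulVec_smul P)
  obtain ⟨m, hm, hPnorm⟩ := hP.exists_pos_mul_le_dotProduct_mulVec (g := fun x => ‖x‖ ^ 2)
    (by fun_prop) fun r x => by rw [norm_smul, mul_pow, Real.norm_eq_abs, sq_abs]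
  have hV : ∀ t, HasDerivAt (fun s => x s ⬝ᵥ P *ᵥ x s) (-(x t ⬝ᵥ Q *ᵥ x t)) t := fun t => by
    have hx := hasDerivAt_exp_smul_mulVec A x₀ t
    convert hx.dotProduct (hx.mulVec P) using 1
    rw [neg_eq_iff_eq_neg.mp hAPQ.symm, neg_mulVec, dotProduct_neg, neg_neg, add_mulVec,
      dotProduct_add, ← mulVec_mulVec, ← mulVec_mulVec, dotProduct_mulVec _ Aᵀ,
      vecMul_transpose]
  have hV_lim := tendsto_zero_of_hasDerivAt_le_neg_mul hκ
    (fun t => by simpa using hP.posSemidef.dotProduct_mulVec_nonneg (x t)) hV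
    (fun t => by linarith [hQP (x t)])
  have hnorm_sq : Tendsto (fun t => ‖x t‖ ^ 2) atTop (𝓝 0) :=
    squeeze_zero (fun _ => by positivity) (fun t => (le_div_iff₀' hm).2 (hPnorm (x t)))
      (by simpa using hV_lim.div_const m)
  rw [tendsto_zero_iff_norm_tendsto_zero]
  simpa using hnorm_sq.sqrt

end Matrix

theorem tendsto_exp_smul_mulVec_fin_two_of_pos {a b c : ℝ} (ha : 0 < a) (hb : 0 < b)
    (hc : 0 < c) (x₀ : Fin 2 → ℝ) :
    Tendsto (fun t : ℝ => exp (t • !![-a, b; -c, 0]) *ᵥ x₀) atTop (𝓝 0) := by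
  have hP : (!![2 * c ^ 2, -(a * c); -(a * c), 2 * b * c + a ^ 2]).PosDef :=
    posDef_fin_two_of_pos_of_sq_lt (by positivity) (by nlinarith [mul_pos hb (pow_pos hc 3)])
  have hQ : (!![2 * a * c ^ 2, 0; 0, 2 * a * b * c]).PosDef :=
    posDef_fin_two_of_pos_of_sq_lt (by positivity) (by ring_nf; positivity)
  refine tendsto_exp_smul_mulVec_of_lyapunov hP hQ ?_ x₀
  ext i j
  fin_cases i <;> fin_cases j <;> simp [mul_apply, Fin.sum_univ_two] <;> ring

theorem stmt_2 (D M T : ℝ) (hD : 0 < D) (hM : 0 < M) (hT : 0 < T) :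
    ∀ x₀ : Fin 2 → ℝ,
      Filter.Tendsto
        (fun t : ℝ =>
          (NormedSpace.exp (t • (!![-D/M, 1/M; -T, 0] : Matrix (Fin 2) (Fin 2) ℝ))).mulVec x₀)
        Filter.atTop (nhds 0) := by
  intro x₀
  simpa only [neg_div] using
    tendsto_exp_smul_mulVec_fin_two_of_pos (div_pos hD hM) (one_div_pos.2 hM) hT x₀
end

section
/- Let R be a commutative ring and let A, B, C, D be n×n matrices over R such that B·D = D·B. Then the determinant of the 2n×2n block matrix with blocks (A, B; C, D) equals det(D·A - B·C). -/
/-!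
Multiplying `fromBlocks A B C D` on the left by `fromBlocks D (-B) 0 1` gives a block lower
triangular matrix with diagonal blocks `D * A - B * C` and `D`, because `B` and `D` commute. Hence
`det D * det (fromBlocks A B C D) = det (D * A - B * C) * det D`, and `det D` cancels when it is a
non-zero-divisor. In general, replace `D` by `D + X • 1` over `R[X]`: it still commutes with `B`,
its determinant is the monic polynomial `charpoly (-D)`, and setting `X = 0` recovers the claim.
-/

namespace Matrix

open Polynomial

variable {n R : Type*} [Fintype n] [DecidableEq n] [CommRing R]

theorem fromBlocks_mul_fromBlocks_of_commute (A B C D : Matrix n n R) (hBD : B * D = D * B) :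
    fromBlocks D (-B) 0 1 * fromBlocks A B C D = fromBlocks (D * A - B * C) 0 C D := by
  rw [fromBlocks_multiply]
  simp [hBD, sub_eq_add_neg]

theorem det_fromBlocks_of_commute_of_isLeftRegular (A B C D : Matrix n n R)
    (hBD : B * D = D * B) (hD : IsLeftRegular D.det) :
    (fromBlocks A B C D).det = (D * A - B * C).det := by
  have h := congrArg det (fromBlocks_mul_fromBlocks_of_commute A B C D hBD)
  rw [det_mul, det_fromBlocks_zero₂₁, det_fromBlocks_zero₁₂, det_one, mul_one,
    mul_comm (det _) D.det] at h
  exact hD h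

theorem charmatrix_neg (M : Matrix n n R) :
    charmatrix (-M) = scalar n (X : R[X]) + (Polynomial.C : R →+* R[X]).mapMatrix M := by
  rw [charmatrix, map_neg, sub_neg_eq_add]

theorem evalRingHom_zero_mapMatrix_charmatrix_neg (M : Matrix n n R) :
    (evalRingHom 0).mapMatrix (charmatrix (-M)) = M := by
  ext i j
  by_cases h : i = j <;> simp [charmatrix_neg, h]

theorem det_fromBlocks_of_commute (A B C D : Matrix n n R) (hBD : B * D = D * B) :
    (fromBlocks A B C D).det = (D * A - B * C).det := by
  let ι := (Polynomial.C : R →+* R[X]).mapMatrix (m := n)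
  have heval_map_C (M : Matrix n n R) : (evalRingHom 0).mapMatrix (ι M) = M := by ext; simp [ι]
  have hcomm : ι B * charmatrix (-D) = charmatrix (-D) * ι B := by
    rw [charmatrix_neg, mul_add, add_mul, ← map_mul, ← map_mul, hBD,
      (scalar_commute _ (Commute.all _) _).eq]
  have hpoly := det_fromBlocks_of_commute_of_isLeftRegular (ι A) (ι B) (ι C) (charmatrix (-D))
    hcomm (charpoly_monic (-D)).isRegular.left
  have h := congrArg (evalRingHom 0) hpoly
  rw [RingHom.map_det, RingHom.map_det, RingHom.mapMatrix_apply, fromBlocks_map] at h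
  simpa only [← RingHom.mapMatrix_apply, map_sub, map_mul, heval_map_C,
    evalRingHom_zero_mapMatrix_charmatrix_neg] using h

end Matrix

theorem stmt_5 {R : Type*} [CommRing R] {n : ℕ}
    (A B C D : Matrix (Fin n) (Fin n) R) (hBD : B * D = D * B) :
    (Matrix.fromBlocks A B C D).det = (D * A - B * C).det :=
  Matrix.det_fromBlocks_of_commute A B C D hBD
end

section
/- Let L be a symmetric n×n real matrix and D a real number, and let 𝒜 be the 2n×2n real block matrix with blocks (-D·Iₙ, Iₙ; -L, 0). Then there exists a function μ : Fin n → ℝ such that the characteristic polynomial of L equals ∏ᵢ (X - μᵢ) and the characteristic polynomial of 𝒜 equals ∏ᵢ (X² + D·X + μᵢ). -/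
open Polynomial

lemma aux_det {n : ℕ} (L : Matrix (Fin n) (Fin n) ℝ) (hH : L.IsHermitian) (p : ℝ[X]) :
    (p • (1 : Matrix (Fin n) (Fin n) ℝ[X]) + L.map Polynomial.C).det
      = ∏ i, (p + C (hH.eigenvalues i)) := by
  set V : Matrix (Fin n) (Fin n) ℝ := (hH.eigenvectorUnitary : Matrix (Fin n) (Fin n) ℝ) with hV
  have h1 : V * star V = 1 := (Matrix.mem_unitaryGroup_iff).mp hH.eigenvectorUnitary.2
  have hspec : L = V * Matrix.diagonal hH.eigenvalues * star V := by
    simpa using hH.spectral_theorem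
  set V' := V.map (C : ℝ → ℝ[X]) with hV'
  set W' := (star V).map (C : ℝ → ℝ[X]) with hW'
  have hVW : V' * W' = 1 := by
    rw [hV', hW', ← Matrix.map_mul, h1, Matrix.map_one _ (by simp) (by simp)]
  have hmap : L.map (C : ℝ → ℝ[X])
      = V' * Matrix.diagonal (fun i => C (hH.eigenvalues i)) * W' := by
    have := congrArg (fun M : Matrix (Fin n) (Fin n) ℝ => M.map (C : ℝ → ℝ[X])) hspec
    rw [this, Matrix.map_mul, Matrix.map_mul, Matrix.diagonal_map (by simp)]
  have key : p • (1 : Matrix (Fin n) (Fin n) ℝ[X]) + L.map Polynomial.C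
      = V' * (p • 1 + Matrix.diagonal (fun i => C (hH.eigenvalues i))) * W' := by
    rw [Matrix.mul_add, Matrix.add_mul, Matrix.mul_smul, Matrix.mul_one, Matrix.smul_mul,
      hVW, ← hmap]
  have hdet1 : V'.det * W'.det = 1 := by rw [← Matrix.det_mul, hVW, Matrix.det_one]
  rw [key, Matrix.det_mul, Matrix.det_mul, mul_right_comm, hdet1, one_mul,
    Matrix.smul_one_eq_diagonal, Matrix.diagonal_add, Matrix.det_diagonal]

theorem stmt_6 {n : ℕ} (L : Matrix (Fin n) (Fin n) ℝ) (hL : L.IsSymm) (D : ℝ) :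
    let 𝒜 : Matrix (Fin n ⊕ Fin n) (Fin n ⊕ Fin n) ℝ :=
      Matrix.fromBlocks ((-D) • 1) 1 (-L) 0
    ∃ μ : Fin n → ℝ,
      L.charpoly = ∏ i : Fin n, (X - C (μ i)) ∧
      𝒜.charpoly = ∏ i : Fin n, (X ^ 2 + C D * X + C (μ i)) := by
  intro 𝒜
  have hH : L.IsHermitian := hL
  set μ := hH.eigenvalues with hμ
  refine ⟨μ, ?_, ?_⟩
  · -- charpoly of L
    have h1 : L.charpoly = ((X : ℝ[X]) • (1 : Matrix (Fin n) (Fin n) ℝ[X]) - L.map C).det := by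
      rw [Matrix.charpoly]
      congr 1
      ext i j
      by_cases h : i = j <;>
        simp [Matrix.charmatrix_apply, h, Matrix.one_apply, Matrix.diagonal]
    have h2 : (X : ℝ[X]) • (1 : Matrix (Fin n) (Fin n) ℝ[X]) - L.map C
        = -(((-X : ℝ[X]) • (1 : Matrix (Fin n) (Fin n) ℝ[X])) + L.map C) := by
      rw [neg_add, neg_smul, neg_neg, ← sub_eq_add_neg]
    rw [h1, h2, Matrix.det_neg, aux_det L hH (-X)]
    rw [← Finset.card_univ, ← Finset.prod_const, ← Finset.prod_mul_distrib]
    exact Finset.prod_congr rfl fun i _ => by ring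
  · -- charpoly of 𝒜
    show (Matrix.fromBlocks ((-D) • 1) 1 (-L) (0 : Matrix (Fin n) (Fin n) ℝ)).charpoly = _
    rw [Matrix.charpoly, Matrix.charmatrix_fromBlocks]
    have hb11 : Matrix.charmatrix ((-D) • (1 : Matrix (Fin n) (Fin n) ℝ))
        = ((X : ℝ[X]) + C D) • 1 := by
      ext i j
      by_cases h : i = j <;>
        simp [Matrix.charmatrix_apply, h, Matrix.one_apply, Matrix.diagonal]
    have hb12 : -((1 : Matrix (Fin n) (Fin n) ℝ).map C)
        = (-1 : Matrix (Fin n) (Fin n) ℝ[X]) := by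
      rw [Matrix.map_one _ (by simp) (by simp)]
    have hb21 : -((-L : Matrix (Fin n) (Fin n) ℝ).map C) = L.map C := by
      ext i j; simp
    have hb22 : Matrix.charmatrix (0 : Matrix (Fin n) (Fin n) ℝ)
        = (X : ℝ[X]) • (1 : Matrix (Fin n) (Fin n) ℝ[X]) := by
      ext i j
      by_cases h : i = j <;>
        simp [Matrix.charmatrix_apply, h, Matrix.one_apply, Matrix.diagonal]
    rw [hb11, hb12, hb21, hb22]
    set A₁ : Matrix (Fin n) (Fin n) ℝ[X] := ((X : ℝ[X]) + C D) • 1 with hA₁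
    set Lc : Matrix (Fin n) (Fin n) ℝ[X] := L.map C with hLc
    set q : ℝ[X] := X ^ 2 + C D * X with hq
    set Mq : Matrix (Fin n) (Fin n) ℝ[X] := q • 1 + Lc with hMq
    set X1 : Matrix (Fin n) (Fin n) ℝ[X] := (X : ℝ[X]) • 1 with hX1
    -- row operation
    have step1 : Matrix.fromBlocks (1 : Matrix (Fin n) (Fin n) ℝ[X]) 0 X1 1
          * Matrix.fromBlocks A₁ (-1) Lc X1
        = Matrix.fromBlocks A₁ (-1) Mq 0 := by
      have hbl : X1 * A₁ + 1 * Lc = Mq := by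
        rw [hX1, hA₁, Matrix.smul_mul, Matrix.one_mul, smul_smul, Matrix.one_mul, hMq, hq, hLc]
        have hx : (X : ℝ[X]) * (X + C D) = X ^ 2 + C D * X := by ring
        rw [hx]
      have hbr : X1 * (-1) + 1 * X1 = (0 : Matrix (Fin n) (Fin n) ℝ[X]) := by
        rw [Matrix.mul_neg, Matrix.mul_one, Matrix.one_mul, neg_add_cancel]
      rw [Matrix.fromBlocks_multiply, hbl, hbr, Matrix.one_mul, Matrix.one_mul, Matrix.zero_mul,
        Matrix.zero_mul, add_zero, add_zero]
    have hdetT : (Matrix.fromBlocks (1 : Matrix (Fin n) (Fin n) ℝ[X]) 0 X1 1).det = 1 := by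
      rw [Matrix.det_fromBlocks_zero₁₂, Matrix.det_one, mul_one]
    have e1 : (Matrix.fromBlocks A₁ (-1) Lc X1).det = (Matrix.fromBlocks A₁ (-1) Mq 0).det := by
      rw [← step1, Matrix.det_mul, hdetT, one_mul]
    -- column swap via J of determinant one
    set J : Matrix (Fin n ⊕ Fin n) (Fin n ⊕ Fin n) ℝ[X] := Matrix.fromBlocks 0 1 (-1) 0 with hJ
    have hdetJ : J.det = 1 := by
      have : J = Matrix.fromBlocks (1 : Matrix (Fin n) (Fin n) ℝ[X]) 1 0 1
          * Matrix.fromBlocks 1 0 (-1) 1 * Matrix.fromBlocks 1 1 0 1 := by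
        rw [Matrix.fromBlocks_multiply, Matrix.fromBlocks_multiply]
        simp [hJ]
      rw [this, Matrix.det_mul, Matrix.det_mul, Matrix.det_fromBlocks_zero₂₁,
        Matrix.det_fromBlocks_zero₁₂]
      simp
    have step2 : Matrix.fromBlocks (-1 : Matrix (Fin n) (Fin n) ℝ[X]) (-A₁) 0 (-Mq) * J
        = Matrix.fromBlocks A₁ (-1) Mq 0 := by
      rw [hJ, Matrix.fromBlocks_multiply]
      simp
    have e2 : (Matrix.fromBlocks A₁ (-1) Mq 0).det = Mq.det := by
      rw [← step2, Matrix.det_mul, hdetJ, mul_one, Matrix.det_fromBlocks_zero₂₁,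
        Matrix.det_neg, Matrix.det_neg, Matrix.det_one, mul_one]
      rw [← mul_assoc, ← pow_add]
      rw [Even.neg_one_pow ⟨Fintype.card (Fin n), rfl⟩, one_mul]
    rw [e1, e2, hMq, hLc, aux_det L hH q]
end

section
/- Let L be a symmetric n×n real matrix and D a real number, and let 𝒜 be the 2n×2n real block matrix with blocks (-D·Iₙ, Iₙ; -L, 0). Then a complex number λ is an eigenvalue of 𝒜 (viewed as a complex matrix) if and only if there exists a real eigenvalue μ̃ of L such that λ² + D·λ + μ̃ = 0, i.e. λ = (-D ± √(D² - 4μ̃))/2. -/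
/-!
The matrix `λ - 𝒜 = (λ + D, -1; L, λ)` has the invertible block `-1` off the diagonal, so after
swapping the two column blocks the Schur complement shows that its determinant agrees, up to a
unit, with `det (L + λ (λ + D))`. Hence `λ` is an eigenvalue of `𝒜` exactly when `-(λ² + D λ)` is
an eigenvalue of `L` over `ℂ`. Since `L` is real symmetric, its complex eigenvalues are real, and
they are then eigenvalues of `L` over `ℝ`.
-/

open Matrix Polynomial

namespace Matrix

variable {m R K : Type*} [Fintype m] [DecidableEq m]

theorem associated_det_fromBlocks_neg_one₁₂ [CommRing R] (A C D : Matrix m m R) :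
    Associated (fromBlocks A (-1) C D).det (C + D * A).det := by
  have hswap :
      (fromBlocks A (-1) C D).submatrix id (Equiv.sumComm m m) = fromBlocks (-1) A D C := by
    ext (i | i) (j | j) <;> rfl
  have : Invertible (1 : Matrix m m R) := invertibleOne
  have : Invertible (-1 : Matrix m m R) := invertibleNeg 1
  have h := det_permute' (Equiv.sumComm m m) (fromBlocks A (-1) C D)
  rw [hswap, det_fromBlocks₁₁, invOf_neg, invOf_one, Matrix.mul_neg, Matrix.mul_one,
    Matrix.neg_mul, sub_neg_eq_add] at h
  have hsign : IsUnit (Equiv.Perm.sign (Equiv.sumComm m m) : R) :=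
    (Equiv.Perm.sign _).isUnit.map (Int.castRingHom R)
  refine (associated_unit_mul_left _ _ hsign).symm.trans ?_
  rw [← h]
  exact associated_unit_mul_left _ _ (isUnit_det_of_invertible _)

theorem mem_spectrum_iff_det_eq_zero [Field K] (M : Matrix m m K) (x : K) :
    x ∈ spectrum K M ↔ (scalar m x - M).det = 0 := by
  rw [mem_spectrum_iff_isRoot_charpoly, IsRoot, eval_charpoly]

theorem mem_spectrum_map_iff [Field K] {L : Type*} [Field L] (f : K →+* L) (M : Matrix m m K)
    (x : K) :
    f x ∈ spectrum L (M.map f) ↔ x ∈ spectrum K M := by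
  rw [mem_spectrum_iff_isRoot_charpoly, mem_spectrum_iff_isRoot_charpoly, charpoly_map,
    isRoot_map_iff f.injective]

theorem mem_spectrum_fromBlocks_iff [Field K] (M : Matrix m m K) (d x : K) :
    x ∈ spectrum K (fromBlocks (-d • 1) (1 : Matrix m m K) (-M) 0) ↔
      -(x ^ 2 + d * x) ∈ spectrum K M := by
  have hblock : scalar (m ⊕ m) x - fromBlocks (-d • 1) (1 : Matrix m m K) (-M) 0
      = fromBlocks (scalar m (x + d)) (-1 : Matrix m m K) M (scalar m x) := by
    ext (i | i) (j | j) <;> by_cases h : i = j <;> simp [h]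
  have hschur : M + scalar m x * scalar m (x + d) = -(scalar m (-(x ^ 2 + d * x)) - M) := by
    simp only [← map_mul, map_neg, neg_sub, sub_neg_eq_add]
    ring_nf
  rw [mem_spectrum_iff_det_eq_zero, mem_spectrum_iff_det_eq_zero, hblock,
    (associated_det_fromBlocks_neg_one₁₂ _ _ _).eq_zero_iff, hschur, det_neg, mul_eq_zero]
  simp

theorem IsSymm.spectrum_map_ofReal {L : Matrix m m ℝ} (hL : L.IsSymm) :
    spectrum ℂ (L.map Complex.ofReal) = Complex.ofReal '' spectrum ℝ L := by
  have hherm : (L.map Complex.ofReal).IsHermitian :=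
    (isHermitian_iff_isSymm.2 hL).map _ fun x => (Complex.conj_ofReal x).symm
  ext z
  constructor
  · intro hz
    obtain ⟨_, ⟨i, rfl⟩, rfl⟩ := hherm.spectrum_eq_image_range ▸ hz
    exact ⟨_, (mem_spectrum_map_iff Complex.ofRealHom L _).1 hz, rfl⟩
  · rintro ⟨μ, hμ, rfl⟩
    exact (mem_spectrum_map_iff Complex.ofRealHom L μ).2 hμ

end Matrix

theorem stmt_7 {n : ℕ} (L : Matrix (Fin n) (Fin n) ℝ) (hL : L.IsSymm) (D : ℝ) :
    let 𝒜 : Matrix (Fin n ⊕ Fin n) (Fin n ⊕ Fin n) ℝ :=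
      Matrix.fromBlocks ((-D) • 1) 1 (-L) 0
    ∀ lam : ℂ,
      lam ∈ spectrum ℂ (𝒜.map Complex.ofReal) ↔
        ∃ μ : ℝ, μ ∈ spectrum ℝ L ∧ lam ^ 2 + (D : ℂ) * lam + (μ : ℂ) = 0 := by
  intro 𝒜 lam
  have hmap : 𝒜.map Complex.ofReal = fromBlocks (-(D : ℂ) • 1) 1 (-L.map Complex.ofReal) 0 := by
    ext (i | i) (j | j) <;> by_cases hij : i = j <;> simp [𝒜, hij]
  rw [hmap, mem_spectrum_fromBlocks_iff, hL.spectrum_map_ofReal]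
  refine exists_congr fun μ => and_congr_right fun _ => ?_
  constructor <;> intro h <;> linear_combination h
end

section
/- Let G be a finite simple graph on n vertices with Laplacian matrix L(G) and maximum vertex degree d_max, let D be a real number with D ≥ √(8·d_max), and let 𝒜 be the 2n×2n real block matrix with blocks (-D·Iₙ, Iₙ; -L(G), 0). Then every complex eigenvalue of 𝒜 is real and nonpositive (i.e. it has zero imaginary part and nonpositive real part). -/
/-!
An eigenvector `(x, y)` of `𝒜` for `λ` satisfies `y = (λ + D) x` and `L x = -λ (λ + D) x`, so
`μ = -λ (λ + D)` is an eigenvalue of the Laplacian `L`. As `L` is Hermitian, `μ` is real, and the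
Gershgorin disc `|μ - deg k| ≤ deg k` gives `0 ≤ μ ≤ 2 d_max`. Thus `λ` is a root of
`X² + D X + μ`, whose discriminant `D² - 4 μ ≥ D² - 8 d_max` is nonnegative: both roots are real,
and they are nonpositive because their sum is `-D ≤ 0` and their product is `μ ≥ 0`.
-/

open Finset Matrix Module

theorem Matrix.neg_mul_add_mem_spectrum_of_mem_spectrum_fromBlocks {K n : Type*} [Field K]
    [Fintype n] [DecidableEq n] {D z : K} {L : Matrix n n K}
    (h : z ∈ spectrum K (fromBlocks (-D • 1) 1 (-L) 0 : Matrix (n ⊕ n) (n ⊕ n) K)) :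
    -(z * (z + D)) ∈ spectrum K L := by
  rw [← spectrum_toLin', ← End.hasEigenvalue_iff_mem_spectrum] at h ⊢
  obtain ⟨v, hv, hv0⟩ := h.exists_hasEigenvector
  obtain ⟨x, y, rfl⟩ : ∃ x y, v = Sum.elim x y := ⟨_, _, (Sum.elim_comp_inl_inr v).symm⟩
  rw [End.mem_eigenspace_iff, toLin'_apply, fromBlocks_mulVec] at hv
  have hx : -D • x + y = z • x :=
    funext fun i => by simpa [neg_mulVec, smul_mulVec] using congrFun hv (Sum.inl i)
  have hy : -(L *ᵥ x) = z • y :=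
    funext fun i => by simpa [neg_mulVec] using congrFun hv (Sum.inr i)
  have hy_eq : y = (z + D) • x := by
    rw [add_smul, ← hx]
    simp [neg_smul]
  have hx0 : x ≠ 0 := by
    rintro rfl
    exact hv0 (by simp [hy_eq])
  refine End.hasEigenvalue_of_hasEigenvector ⟨End.mem_eigenspace_iff.mpr ?_, hx0⟩
  rw [toLin'_apply, neg_smul, mul_smul, ← hy_eq, ← hy, neg_neg]

theorem Complex.im_eq_zero_and_re_nonpos_of_mul_add_eq_neg {z : ℂ} {D m : ℝ} (hD : 0 ≤ D)
    (hm : 0 ≤ m) (hdisc : 4 * m ≤ D ^ 2) (h : z * (z + D) = -m) : z.im = 0 ∧ z.re ≤ 0 := by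
  have hre := congrArg Complex.re h
  have him := congrArg Complex.im h
  simp only [mul_re, mul_im, add_re, add_im, ofReal_re, ofReal_im, neg_re, neg_im] at hre him
  have him0 : z.im = 0 := by
    rcases mul_eq_zero.mp (show z.im * (2 * z.re + D) = 0 by linear_combination him) with h | h
    · exact h
    · nlinarith
  exact ⟨him0, by nlinarith⟩

namespace SimpleGraph

variable {V : Type*} [Fintype V] [DecidableEq V] (G : SimpleGraph V) [DecidableRel G.Adj]

theorem lapMatrix_map {R S : Type*} [Ring R] [Ring S] (f : R →+* S) :
    (G.lapMatrix R).map f = G.lapMatrix S := by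
  ext i j
  by_cases h : i = j <;> by_cases hij : G.Adj i j <;> simp [lapMatrix, degMatrix, h, hij]

variable {𝕜 : Type*} [RCLike 𝕜]

theorem sum_norm_lapMatrix_offDiag (k : V) :
    ∑ j ∈ univ.erase k, ‖G.lapMatrix 𝕜 k j‖ = G.degree k := by
  have hoff : ∀ j ∈ univ.erase k, ‖G.lapMatrix 𝕜 k j‖ = if G.Adj k j then 1 else 0 := by
    intro j hj
    simp [lapMatrix, degMatrix, adjMatrix, diagonal_apply_ne _ (ne_of_mem_erase hj).symm,
      apply_ite]
  rw [sum_congr rfl hoff, sum_erase _ (by simp), degree_eq_sum_if_adj]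

theorem exists_norm_sub_degree_le_of_mem_spectrum_lapMatrix {μ : 𝕜}
    (hμ : μ ∈ spectrum 𝕜 (G.lapMatrix 𝕜)) : ∃ k, ‖μ - G.degree k‖ ≤ G.degree k := by
  rw [← spectrum_toLin', ← End.hasEigenvalue_iff_mem_spectrum] at hμ
  obtain ⟨k, hk⟩ := eigenvalue_mem_ball hμ
  have hkk : G.lapMatrix 𝕜 k k = G.degree k := by simp [lapMatrix, degMatrix]
  rw [Metric.mem_closedBall, sum_norm_lapMatrix_offDiag, hkk, dist_eq_norm] at hk
  exact ⟨k, hk⟩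

theorem exists_mem_Icc_eq_ofReal_of_mem_spectrum_lapMatrix {μ : 𝕜}
    (hμ : μ ∈ spectrum 𝕜 (G.lapMatrix 𝕜)) :
    ∃ m ∈ Set.Icc (0 : ℝ) (2 * G.maxDegree), μ = m := by
  obtain ⟨m, -, rfl⟩ : ∃ m ∈ Set.range (G.isHermitian_lapMatrix 𝕜).eigenvalues, (m : 𝕜) = μ := by
    rwa [← Set.mem_image, ← (G.isHermitian_lapMatrix 𝕜).spectrum_eq_image_range]
  obtain ⟨k, hk⟩ := G.exists_norm_sub_degree_le_of_mem_spectrum_lapMatrix hμ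
  rw [← RCLike.ofReal_natCast, ← RCLike.ofReal_sub, RCLike.norm_ofReal, abs_le] at hk
  have hdeg : (G.degree k : ℝ) ≤ G.maxDegree := by exact_mod_cast G.degree_le_maxDegree k
  exact ⟨m, ⟨by linarith, by linarith⟩, rfl⟩

end SimpleGraph

theorem stmt_10 {n : ℕ} (G : SimpleGraph (Fin n)) [DecidableRel G.Adj]
    (D : ℝ) (hD : D ≥ Real.sqrt (8 * G.maxDegree)) :
    let 𝒜 : Matrix (Fin n ⊕ Fin n) (Fin n ⊕ Fin n) ℝ :=
      Matrix.fromBlocks ((-D) • 1) 1 (-(G.lapMatrix ℝ)) 0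
    ∀ lam : ℂ, lam ∈ spectrum ℂ (𝒜.map Complex.ofReal) →
      lam.im = 0 ∧ lam.re ≤ 0 := by
  intro 𝒜 lam hlam
  have h𝒜 : 𝒜.map Complex.ofReal = fromBlocks (-(D : ℂ) • 1) 1 (-G.lapMatrix ℂ) 0 := by
    rw [fromBlocks_map, Matrix.map_smul' _ _ _ Complex.ofReal_mul, Complex.ofReal_neg,
      Matrix.map_one _ Complex.ofReal_zero Complex.ofReal_one, Matrix.map_neg _ Complex.ofReal_neg,
      Matrix.map_zero _ Complex.ofReal_zero, ← G.lapMatrix_map Complex.ofRealHom]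
    rfl
  rw [h𝒜] at hlam
  obtain ⟨m, ⟨hm0, hmax⟩, hm⟩ := G.exists_mem_Icc_eq_ofReal_of_mem_spectrum_lapMatrix
    (neg_mul_add_mem_spectrum_of_mem_spectrum_fromBlocks hlam)
  obtain ⟨hD0, hD2⟩ := Real.sqrt_le_iff.mp hD
  exact Complex.im_eq_zero_and_re_nonpos_of_mul_add_eq_neg hD0 hm0 (by linarith)
    (by linear_combination -hm)
end

section
/- Let G be a finite simple graph on n vertices having at least one edge, with Laplacian matrix L(G) and maximum vertex degree d_max, let D be a real number with 0 ≤ D and D² < 4·d_max, and let 𝒜 be the 2n×2n real block matrix with blocks (-D·Iₙ, Iₙ; -L(G), 0). Then 𝒜 has at least one complex eigenvalue with nonzero imaginary part. -/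
/-!
If `L u = μ u` and `λ² + D λ + μ = 0`, then `(u, (λ + D) u)` is an eigenvector of the block
matrix `𝒜` with eigenvalue `λ`. The Laplacian is Hermitian, and its diagonal entry `d_max` at a
vertex of maximal degree is a convex combination of its eigenvalues, so some eigenvalue satisfies
`μ ≥ d_max > D² / 4`. The quadratic `λ² + D λ + μ` then has negative discriminant, hence a
non-real root.
-/

open Matrix

theorem SimpleGraph.lapMatrix_apply_self {V R : Type*} [Fintype V] [DecidableEq V]
    (G : SimpleGraph V) [DecidableRel G.Adj] [AddGroupWithOne R] (v : V) :
    G.lapMatrix R v v = G.degree v := by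
  simp [lapMatrix, degMatrix]

theorem SimpleGraph.lapMatrix_map_s11 {V R S : Type*} [Fintype V] [DecidableEq V]
    (G : SimpleGraph V) [DecidableRel G.Adj] [Ring R] [Ring S] (f : R →+* S) :
    (G.lapMatrix R).map f = G.lapMatrix S := by
  ext i j
  by_cases h : i = j <;> simp [lapMatrix, degMatrix, adjMatrix_apply, h, apply_ite f]

theorem Matrix.IsHermitian.exists_re_apply_self_le_eigenvalues {𝕜 n : Type*} [RCLike 𝕜]
    [Fintype n] [DecidableEq n] {A : Matrix n n 𝕜} (hA : A.IsHermitian) (j : n) :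
    ∃ i, RCLike.re (A j j) ≤ hA.eigenvalues i := by
  obtain ⟨i, -, hi⟩ := Finset.exists_max_image Finset.univ hA.eigenvalues ⟨j, Finset.mem_univ j⟩
  refine ⟨i, ?_⟩
  set U := (hA.eigenvectorUnitary : Matrix n n 𝕜)
  have hdiag : RCLike.re (A j j) = ∑ k, hA.eigenvalues k * ‖U j k‖ ^ 2 := by
    conv_lhs => rw [hA.spectral_theorem, Unitary.conjStarAlgAut_apply]
    rw [mul_apply]
    simp only [mul_diagonal, star_apply, Function.comp_apply, map_sum]
    refine Finset.sum_congr rfl fun k _ => ?_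
    rw [mul_right_comm, RCLike.star_def, RCLike.mul_conj, ← RCLike.ofReal_pow, ← RCLike.ofReal_mul,
      RCLike.ofReal_re, mul_comm]
  have hrow : ∑ k, ‖U j k‖ ^ 2 = 1 := by
    have hUU := congrFun (congrFun (mem_unitaryGroup_iff.mp hA.eigenvectorUnitary.2) j) j
    simp only [mul_apply, star_apply, RCLike.star_def, RCLike.mul_conj, one_apply_eq] at hUU
    exact_mod_cast hUU
  calc RCLike.re (A j j) = ∑ k, hA.eigenvalues k * ‖U j k‖ ^ 2 := hdiag
    _ ≤ ∑ k, hA.eigenvalues i * ‖U j k‖ ^ 2 := by gcongr with k; exact hi k (Finset.mem_univ k)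
    _ = hA.eigenvalues i := by rw [← Finset.mul_sum, hrow, mul_one]

theorem Matrix.mem_spectrum_iff_exists_mulVec_eq_smul {K ι : Type*} [Field K] [Fintype ι]
    [DecidableEq ι] {A : Matrix ι ι K} {μ : K} :
    μ ∈ spectrum K A ↔ ∃ v ≠ 0, A *ᵥ v = μ • v := by
  rw [← spectrum_toLin', ← Module.End.hasEigenvalue_iff_mem_spectrum]
  constructor
  · intro h
    obtain ⟨v, hv⟩ := h.exists_hasEigenvector
    exact ⟨v, hv.2, by simpa using Module.End.mem_eigenspace_iff.mp hv.1⟩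
  · rintro ⟨v, hv0, hv⟩
    exact Module.End.hasEigenvalue_of_hasEigenvector
      ⟨Module.End.mem_eigenspace_iff.mpr (by simpa using hv), hv0⟩

theorem Matrix.mem_spectrum_fromBlocks_of_mem_spectrum {K ι : Type*} [Field K] [Fintype ι]
    [DecidableEq ι] {L : Matrix ι ι K} {D μ l : K} (hμ : μ ∈ spectrum K L)
    (hl : l * (l + D) = -μ) :
    l ∈ spectrum K (fromBlocks (-D • 1) 1 (-L) 0 : Matrix (ι ⊕ ι) (ι ⊕ ι) K) := by
  obtain ⟨u, hu0, hu⟩ := mem_spectrum_iff_exists_mulVec_eq_smul.mp hμ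
  refine mem_spectrum_iff_exists_mulVec_eq_smul.mpr
    ⟨Sum.elim u ((l + D) • u), fun h => hu0 (by simpa using congrArg (· ∘ Sum.inl) h), ?_⟩
  ext (i | i) <;>
    simp only [fromBlocks_mulVec, Sum.elim_comp_inl, Sum.elim_comp_inr, neg_smul, neg_mulVec,
      smul_mulVec, one_mulVec, zero_mulVec, hu, add_zero, Sum.elim_inl, Sum.elim_inr,
      Pi.add_apply, Pi.neg_apply, Pi.smul_apply, smul_eq_mul]
  · ring
  · linear_combination (-u i) * hl

theorem Complex.exists_im_ne_zero_mul_add_eq_neg {D μ : ℝ} (h : D ^ 2 < 4 * μ) :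
    ∃ l : ℂ, l.im ≠ 0 ∧ l * (l + D) = -μ := by
  have hpos : 0 < 4 * μ - D ^ 2 := by linarith
  refine ⟨⟨-D / 2, √(4 * μ - D ^ 2) / 2⟩, by simp [(Real.sqrt_pos.mpr hpos).ne'], ?_⟩
  have hs := Real.sq_sqrt hpos.le
  apply Complex.ext <;>
    simp only [mul_re, mul_im, add_re, add_im, ofReal_re, ofReal_im, neg_re, neg_im, add_zero,
      neg_zero]
  · linear_combination (-1 / 4 : ℝ) * hs
  · ring

theorem stmt_11_general {n : ℕ} (G : SimpleGraph (Fin n)) [DecidableRel G.Adj]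
    (D : ℝ) (hD : D ^ 2 < 4 * G.maxDegree) :
    let 𝒜 : Matrix (Fin n ⊕ Fin n) (Fin n ⊕ Fin n) ℝ :=
      Matrix.fromBlocks ((-D) • 1) 1 (-(G.lapMatrix ℝ)) 0
    ∃ lam : ℂ, lam ∈ spectrum ℂ (𝒜.map Complex.ofReal) ∧ lam.im ≠ 0 := by
  intro 𝒜
  have : Nonempty (Fin n) := by
    by_contra h
    have : Subsingleton (Fin n) := (not_nonempty_iff.mp h).instSubsingleton
    exact (sq_nonneg D).not_gt (by simpa [G.maxDegree_of_subsingleton] using hD)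
  obtain ⟨v, hv⟩ := G.exists_maximal_degree_vertex
  have hL := G.isHermitian_lapMatrix ℂ
  obtain ⟨i, hi⟩ := hL.exists_re_apply_self_le_eigenvalues v
  rw [G.lapMatrix_apply_self, RCLike.natCast_re, ← hv] at hi
  obtain ⟨l, hl_im, hl⟩ := Complex.exists_im_ne_zero_mul_add_eq_neg
    (hD.trans_le (by gcongr) : D ^ 2 < 4 * hL.eigenvalues i)
  have h𝒜 : 𝒜.map Complex.ofReal = fromBlocks (-(D : ℂ) • 1) 1 (-G.lapMatrix ℂ) 0 := by
    rw [← G.lapMatrix_map_s11 Complex.ofRealHom, fromBlocks_map]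
    congr 1 <;> ext i j <;> by_cases h : i = j <;> simp [one_apply, h]
  refine ⟨l, ?_, hl_im⟩
  rw [h𝒜]
  exact mem_spectrum_fromBlocks_of_mem_spectrum (hL.eigenvalues_mem_spectrum_real i) hl

theorem stmt_11 {n : ℕ} (G : SimpleGraph (Fin n)) [DecidableRel G.Adj]
    (hE : G.edgeSet.Nonempty)
    (D : ℝ) (hD0 : 0 ≤ D) (hD : D ^ 2 < 4 * G.maxDegree) :
    let 𝒜 : Matrix (Fin n ⊕ Fin n) (Fin n ⊕ Fin n) ℝ :=
      Matrix.fromBlocks ((-D) • 1) 1 (-(G.lapMatrix ℝ)) 0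
    ∃ lam : ℂ, lam ∈ spectrum ℂ (𝒜.map Complex.ofReal) ∧ lam.im ≠ 0 :=
  stmt_11_general G D hD
end

section
/- Let n ≥ 3, let G be the path (chain) graph on n vertices, with Laplacian matrix L(G), let D be a real number with 0 ≤ D < 2·√2, and let 𝒜 be the 2n×2n real block matrix with blocks (-D·Iₙ, Iₙ; -L(G), 0). Then 𝒜 has at least one complex eigenvalue with nonzero imaginary part. -/
open Real Finset Matrix

lemma lap_entry {n : ℕ} (G : SimpleGraph (Fin n)) [DecidableRel G.Adj]
    (vec : Fin n → ℝ) (i : Fin n) :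
    (G.lapMatrix ℝ *ᵥ vec) i = ∑ j, if G.Adj i j then vec i - vec j else 0 := by
  rw [SimpleGraph.lapMatrix_mulVec_apply]
  rw [SimpleGraph.neighborFinset_eq_filter, Finset.sum_filter]
  have hdeg : (G.degree i : ℝ) = ∑ j, if G.Adj i j then (1:ℝ) else 0 := by
    rw [SimpleGraph.degree, SimpleGraph.neighborFinset_eq_filter]
    rw [Finset.card_filter]
    push_cast
    rfl
  rw [hdeg, Finset.sum_mul, ← Finset.sum_sub_distrib]
  apply Finset.sum_congr rfl
  intro j _
  split <;> simp

lemma mulVec_ofReal {n : ℕ} (A : Matrix (Fin n) (Fin n) ℝ) (v : Fin n → ℝ) :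
    (A.map Complex.ofReal) *ᵥ (fun i => (v i : ℂ)) = fun i => ((A *ᵥ v) i : ℂ) := by
  funext i
  simp [Matrix.mulVec, dotProduct, Matrix.map_apply]

lemma map_one_ofReal {n : ℕ} :
    (1 : Matrix (Fin n) (Fin n) ℝ).map Complex.ofReal = 1 := by
  ext i j
  simp [Matrix.map_apply, Matrix.one_apply, apply_ite Complex.ofReal]

lemma map_smul_one_ofReal {n : ℕ} (a : ℝ) :
    ((a • 1 : Matrix (Fin n) (Fin n) ℝ)).map Complex.ofReal
      = ((a : ℂ) • 1 : Matrix (Fin n) (Fin n) ℂ) := by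
  ext i j
  simp [Matrix.map_apply, Matrix.one_apply, apply_ite Complex.ofReal,
    apply_ite (fun x : ℝ => ((a * x : ℝ) : ℂ))]

noncomputable def thetaP (n : ℕ) : ℝ := ((n:ℝ) - 1) * Real.pi / n

noncomputable def pw (n : ℕ) (j : ℕ) : ℝ :=
  Real.cos (thetaP n * j + thetaP n / 2)

lemma pw_rec (n : ℕ) (j : ℕ) :
    pw n j + pw n (j+2) = 2 * Real.cos (thetaP n) * pw n (j+1) := by
  set θ := thetaP n
  simp only [pw]
  push_cast
  have key0 : ∀ a : ℝ, Real.cos (a - θ) + Real.cos (a + θ)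
      = 2 * Real.cos θ * Real.cos a := by
    intro a; rw [Real.cos_sub, Real.cos_add]; ring
  have key := key0 (θ*((j:ℝ)+1)+θ/2)
  have e1 : (θ*((j:ℝ)+1)+θ/2) - θ = θ*(j:ℝ) + θ/2 := by ring
  have e2 : (θ*((j:ℝ)+1)+θ/2) + θ = θ*((j:ℝ)+2) + θ/2 := by ring
  rw [e1, e2] at key
  linarith

lemma pw_left (n : ℕ) :
    pw n 1 = 2 * Real.cos (thetaP n) * pw n 0 - pw n 0 := by
  set θ := thetaP n
  simp only [pw]
  push_cast
  have h1 := Real.cos_add θ (θ/2)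
  have h2 := Real.cos_sub θ (θ/2)
  rw [show θ - θ/2 = θ/2 by ring] at h2
  rw [show θ*(1:ℝ) + θ/2 = θ + θ/2 by ring, show θ*(0:ℝ) + θ/2 = θ/2 by ring]
  linarith

lemma pw_right (n : ℕ) (hn : 1 ≤ n) : pw n n = pw n (n-1) := by
  have hn0 : (n:ℝ) ≠ 0 := by
    exact_mod_cast Nat.one_le_iff_ne_zero.mp hn
  set θ := thetaP n with hθ
  have hθn : θ * n = ((n:ℝ) - 1) * Real.pi := by
    rw [hθ, thetaP]; field_simp
  have hsin : Real.sin (((n:ℝ) - 1) * Real.pi) = 0 := by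
    have : ((n:ℝ) - 1) = ((n - 1 : ℕ) : ℝ) := by
      rw [Nat.cast_sub hn, Nat.cast_one]
    rw [this, Real.sin_nat_mul_pi]
  simp only [pw]
  rw [Nat.cast_sub hn, Nat.cast_one]
  rw [show θ * (n:ℝ) + θ/2 = ((n:ℝ)-1)*Real.pi + θ/2 by rw [← hθn],
      show θ * ((n:ℝ) - 1) + θ/2 = ((n:ℝ)-1)*Real.pi - θ/2 by
        rw [← hθn]; ring,
      Real.cos_add, Real.cos_sub, hsin]
  ring

lemma path_lap_apply {n : ℕ} (hn : 3 ≤ n) [DecidableRel (SimpleGraph.pathGraph n).Adj]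
    (i : Fin n) :
    ((SimpleGraph.pathGraph n).lapMatrix ℝ *ᵥ (fun j : Fin n => pw n j.val)) i
      = (2 - 2 * Real.cos (thetaP n)) * pw n i.val := by
  rw [lap_entry]
  have hrw : ∀ j ∈ (Finset.univ : Finset (Fin n)),
      (if (SimpleGraph.pathGraph n).Adj i j then pw n i.val - pw n j.val else 0)
      = (fun k : ℕ => if ((i:ℕ)+1 = k ∨ k+1 = (i:ℕ)) then pw n i.val - pw n k else 0) j.val := by
    intro j _
    simp only [SimpleGraph.pathGraph_adj]
  rw [Finset.sum_congr rfl hrw,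
    Fin.sum_univ_eq_sum_range (fun k : ℕ => if ((i:ℕ)+1 = k ∨ k+1 = (i:ℕ)) then pw n i.val - pw n k else 0) n]
  have hsplit : ∀ k ∈ Finset.range n,
      (if ((i:ℕ)+1 = k ∨ k+1 = (i:ℕ)) then pw n i.val - pw n k else 0)
      = (if (i:ℕ)+1 = k then pw n i.val - pw n k else 0)
        + (if k+1 = (i:ℕ) then pw n i.val - pw n k else 0) := by
    intro k _
    rcases eq_or_ne ((i:ℕ)+1) k with h1 | h1 <;> rcases eq_or_ne (k+1) ((i:ℕ)) with h2 | h2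
    · omega
    · simp [h1, h2]
    · simp [h1, h2]
    · simp [h1, h2]
  rw [Finset.sum_congr rfl hsplit, Finset.sum_add_distrib, Finset.sum_ite_eq]
  obtain ⟨m, hmlt⟩ := i
  simp only []
  rcases m with _ | k
  · rw [Finset.sum_eq_zero (fun k _ => by simp)]
    rw [if_pos (Finset.mem_range.mpr (by omega : 0 + 1 < n))]
    have hb := pw_left n
    linear_combination -hb
  · have hcond : ∀ a ∈ Finset.range n,
        (if a + 1 = k + 1 then pw n (k+1) - pw n a else 0)
        = (if a = k then pw n (k+1) - pw n a else 0) := by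
      intro a _
      simp [Nat.add_right_cancel_iff]
    rw [Finset.sum_congr rfl hcond, Finset.sum_ite_eq' (Finset.range n) k,
      if_pos (Finset.mem_range.mpr (by omega : k < n))]
    rcases lt_or_eq_of_le (by omega : k + 2 ≤ n) with hlt | heq
    · rw [if_pos (Finset.mem_range.mpr (by omega : k + 1 + 1 < n))]
      have hr := pw_rec n k
      linear_combination -hr
    · rw [if_neg (by simp [Finset.mem_range]; omega)]
      have hr := pw_rec n k
      have hc : pw n (k+2) = pw n (k+1) := by
        have h1 := pw_right n (by omega : 1 ≤ n)
        rw [show n - 1 = k + 1 by omega] at h1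
        rw [heq]
        exact h1
      linear_combination -hr + hc

theorem stmt_15 {n : ℕ} (hn : 3 ≤ n)
    [DecidableRel (SimpleGraph.pathGraph n).Adj]
    (D : ℝ) (hD0 : 0 ≤ D) (hD : D < 2 * Real.sqrt 2) :
    let 𝒜 : Matrix (Fin n ⊕ Fin n) (Fin n ⊕ Fin n) ℝ :=
      Matrix.fromBlocks ((-D) • 1) 1 (-((SimpleGraph.pathGraph n).lapMatrix ℝ)) 0
    ∃ lam : ℂ, lam ∈ spectrum ℂ (𝒜.map Complex.ofReal) ∧ lam.im ≠ 0 := by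
  intro 𝒜
  have h𝒜 : 𝒜 = Matrix.fromBlocks ((-D) • 1) 1
      (-((SimpleGraph.pathGraph n).lapMatrix ℝ)) 0 := rfl
  have hπ := Real.pi_pos
  have hnR : (3:ℝ) ≤ n := by exact_mod_cast hn
  have hθeq : thetaP n = Real.pi - Real.pi / n := by
    rw [thetaP]; field_simp
  have hcle : Real.cos (thetaP n) ≤ -(1/2) := by
    rw [hθeq, Real.cos_pi_sub]
    have h1 : Real.pi / n ≤ Real.pi / 3 := by
      gcongr
    have h2 : Real.cos (Real.pi/3) ≤ Real.cos (Real.pi/n) :=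
      Real.cos_le_cos_of_nonneg_of_le_pi (by positivity) (by
        nlinarith) h1
    rw [Real.cos_pi_div_three] at h2
    linarith
  set μ : ℝ := 2 - 2 * Real.cos (thetaP n) with hμ
  have hμ3 : 3 ≤ μ := by rw [hμ]; linarith
  have hD2 : D^2 < 8 := by
    have h8 : (2*Real.sqrt 2)^2 = 8 := by
      rw [mul_pow, Real.sq_sqrt (by norm_num : (0:ℝ) ≤ 2)]; norm_num
    nlinarith [Real.sqrt_nonneg 2]
  have hpos : 0 < μ - D^2/4 := by linarith
  set s : ℝ := Real.sqrt (μ - D^2/4) with hs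
  have hs0 : 0 < s := Real.sqrt_pos.mpr hpos
  have hs2 : s^2 = μ - D^2/4 := Real.sq_sqrt hpos.le
  set lam : ℂ := (↑(-(D/2)) : ℂ) + (s:ℂ) * Complex.I with hlam
  have hquad : lam * (lam + (D:ℂ)) = -(μ:ℂ) := by
    have hs2' : ((s:ℂ))^2 = ((μ - D^2/4 : ℝ) : ℂ) := by
      exact_mod_cast congrArg Complex.ofReal hs2
    push_cast at hs2'
    rw [hlam]
    push_cast
    linear_combination (s:ℂ)^2 * Complex.I_sq - hs2'
  -- eigenvector data
  set v : Fin n → ℝ := fun j => pw n j.val with hv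
  have hLv : ∀ i, ((SimpleGraph.pathGraph n).lapMatrix ℝ *ᵥ v) i = μ * v i :=
    fun i => path_lap_apply hn i
  have hθpos : 0 < thetaP n := by
    rw [hθeq]
    have : Real.pi / n ≤ Real.pi / 3 := by gcongr
    linarith
  have hθlt : thetaP n < Real.pi := by
    rw [hθeq]
    have : 0 < Real.pi / n := by positivity
    linarith
  have hw0pos : 0 < pw n 0 := by
    rw [pw]
    have harg : thetaP n * (0:ℕ) + thetaP n / 2 = thetaP n / 2 := by
      push_cast; ring
    rw [harg]
    apply Real.cos_pos_of_mem_Ioo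
    constructor <;> [linarith; linarith]
  refine ⟨lam, ?_, ?_⟩
  swap
  · rw [hlam]
    simp only [Complex.add_im, Complex.ofReal_im, Complex.mul_im, Complex.ofReal_re,
      Complex.I_im, Complex.I_re, mul_zero, mul_one, zero_add]
    simpa using hs0.ne'
  rw [spectrum.mem_iff, Matrix.isUnit_iff_isUnit_det, isUnit_iff_ne_zero, not_ne_iff]
  apply Matrix.exists_mulVec_eq_zero_iff.mp
  refine ⟨Sum.elim (fun j => ((v j : ℝ) : ℂ)) (fun j => (lam + (D:ℂ)) * ((v j : ℝ) : ℂ)), ?_, ?_⟩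
  · intro h0
    have h1 := congrFun h0 (Sum.inl (⟨0, by omega⟩ : Fin n))
    simp only [Sum.elim_inl, Pi.zero_apply, Complex.ofReal_eq_zero] at h1
    exact absurd h1 (by simpa [hv] using hw0pos.ne')
  · have halg : algebraMap ℂ (Matrix (Fin n ⊕ Fin n) (Fin n ⊕ Fin n) ℂ) lam
        = lam • 1 := Algebra.algebraMap_eq_smul_one lam
    have hneg : (-((SimpleGraph.pathGraph n).lapMatrix ℝ)).map Complex.ofReal
        = -(((SimpleGraph.pathGraph n).lapMatrix ℝ).map Complex.ofReal) := by
      ext i j; simp [Matrix.map_apply]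
    have hzero : ((0 : Matrix (Fin n) (Fin n) ℝ)).map Complex.ofReal = 0 := by
      ext i j; simp [Matrix.map_apply]
    rw [halg, Matrix.sub_mulVec, Matrix.smul_mulVec, Matrix.one_mulVec, h𝒜,
      Matrix.fromBlocks_map, map_smul_one_ofReal, map_one_ofReal, hneg, hzero,
      Matrix.fromBlocks_mulVec, Sum.elim_comp_inl, Sum.elim_comp_inr,
      Matrix.neg_mulVec, Matrix.zero_mulVec, Matrix.one_mulVec,
      Matrix.smul_mulVec, mulVec_ofReal]
    funext k
    rcases k with i | i
    · simp only [Matrix.one_mulVec, Pi.sub_apply, Pi.smul_apply, Sum.elim_inl, Pi.add_apply,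
        Pi.zero_apply, smul_eq_mul]
      push_cast
      ring
    · simp only [Matrix.one_mulVec, Pi.sub_apply, Pi.smul_apply, Sum.elim_inr, Pi.add_apply,
        Pi.neg_apply, Pi.zero_apply, smul_eq_mul, hLv i]
      push_cast
      linear_combination ((v i : ℝ) : ℂ) * hquad
end

section
/- Let D be a real number, let L be the 2×2 real matrix with rows (1, -1) and (-1, 1), and let 𝒜 be the 4×4 real block matrix with blocks (-D·I₂, I₂; -L, 0). If 0 ≤ D ≤ 2, then 𝒜 has a complex eigenvalue with nonzero imaginary part; if D ≥ 2·√2, then every complex eigenvalue of 𝒜 is real and nonpositive. -/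
lemma det_fin_four_key (D : ℝ) (lam : ℂ) :
    (!![lam+D,0,-1,0; 0,lam+D,0,-1; 1,-1,lam,0; -1,1,0,lam] : Matrix (Fin 4) (Fin 4) ℂ).det
    = (lam^2 + D*lam) * (lam^2 + D*lam + 2) := by
  simp [Matrix.det_succ_row_zero, Fin.sum_univ_succ, Fin.succAbove]
  ring

lemma matrix_eq_key (D : ℝ) (lam : ℂ) :
    ((algebraMap ℂ (Matrix (Fin 2 ⊕ Fin 2) (Fin 2 ⊕ Fin 2) ℂ) lam -
      ((Matrix.fromBlocks ((-D) • 1) 1 (-(!![1,-1;-1,1] : Matrix (Fin 2) (Fin 2) ℝ)) 0).map Complex.ofReal)).submatrix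
        (finSumFinEquiv (m := 2) (n := 2)).symm (finSumFinEquiv (m := 2) (n := 2)).symm)
    = (!![lam+D,0,-1,0; 0,lam+D,0,-1; 1,-1,lam,0; -1,1,0,lam] : Matrix (Fin 4) (Fin 4) ℂ) := by
  have h0 : (finSumFinEquiv (m := 2) (n := 2)).symm 0 = Sum.inl 0 := by decide
  have h1 : (finSumFinEquiv (m := 2) (n := 2)).symm 1 = Sum.inl 1 := by decide
  have h2 : (finSumFinEquiv (m := 2) (n := 2)).symm 2 = Sum.inr 0 := by decide
  have h3 : (finSumFinEquiv (m := 2) (n := 2)).symm 3 = Sum.inr 1 := by decide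
  ext i j
  fin_cases i <;> fin_cases j <;>
    simp [h0, h1, h2, h3, Matrix.algebraMap_matrix_apply, Matrix.fromBlocks,
      Matrix.one_apply, Matrix.smul_apply]

lemma spec_iff (D : ℝ) (lam : ℂ) :
    lam ∈ spectrum ℂ
      (((Matrix.fromBlocks ((-D) • 1) 1 (-(!![1,-1;-1,1] : Matrix (Fin 2) (Fin 2) ℝ)) 0 :
        Matrix (Fin 2 ⊕ Fin 2) (Fin 2 ⊕ Fin 2) ℝ)).map Complex.ofReal)
    ↔ (lam^2 + D*lam) * (lam^2 + D*lam + 2) = 0 := by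
  rw [spectrum.mem_iff, Matrix.isUnit_iff_isUnit_det, isUnit_iff_ne_zero, not_ne_iff,
    ← Matrix.det_submatrix_equiv_self (finSumFinEquiv (m := 2) (n := 2)).symm,
    matrix_eq_key, det_fin_four_key]

theorem stmt_17 (D : ℝ) :
    let L : Matrix (Fin 2) (Fin 2) ℝ := !![1, -1; -1, 1]
    let 𝒜 : Matrix (Fin 2 ⊕ Fin 2) (Fin 2 ⊕ Fin 2) ℝ :=
      Matrix.fromBlocks ((-D) • 1) 1 (-L) 0
    (0 ≤ D → D ≤ 2 →
      ∃ lam : ℂ, lam ∈ spectrum ℂ (𝒜.map Complex.ofReal) ∧ lam.im ≠ 0) ∧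
    (D ≥ 2 * Real.sqrt 2 →
      ∀ lam : ℂ, lam ∈ spectrum ℂ (𝒜.map Complex.ofReal) →
        lam.im = 0 ∧ lam.re ≤ 0) := by
  intro L 𝒜
  constructor
  · intro hD0 hD2
    have h8 : (0:ℝ) < 8 - D^2 := by nlinarith
    refine ⟨⟨-D/2, Real.sqrt (8 - D^2) / 2⟩, ?_, ?_⟩
    · rw [spec_iff]
      have hs' : Real.sqrt (8 - D*D) * Real.sqrt (8 - D*D) = 8 - D*D :=
        Real.mul_self_sqrt (by nlinarith)
      have : ((⟨-D/2, Real.sqrt (8 - D^2) / 2⟩ : ℂ)^2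
          + D * ⟨-D/2, Real.sqrt (8 - D^2) / 2⟩ + 2) = 0 := by
        rw [Complex.ext_iff]
        constructor
        · simp [pow_two, Complex.mul_re, Complex.mul_im]
          linear_combination (-1/4 : ℝ) * hs'
        · simp [pow_two, Complex.mul_re, Complex.mul_im]
          ring
      rw [this, mul_zero]
    · simp only [ne_eq]
      intro h
      have := Real.sqrt_pos.mpr h8
      simp at h
      linarith
  · intro hD lam hlam
    have hs2 : Real.sqrt 2 ^ 2 = 2 := Real.sq_sqrt (by norm_num)
    have hD8 : 8 ≤ D^2 := by nlinarith [Real.sqrt_nonneg 2]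
    have hDpos : 0 < D := by nlinarith [Real.sqrt_nonneg 2, Real.sqrt_pos.mpr (show (0:ℝ) < 2 by norm_num)]
    rw [spec_iff] at hlam
    rcases mul_eq_zero.mp hlam with h | h
    · have : lam * (lam + D) = 0 := by linear_combination h
      rcases mul_eq_zero.mp this with h' | h'
      · simp [h']
      · have : lam = -D := by linear_combination h'
        subst this
        constructor <;> simp <;> linarith
    · -- lam^2 + D*lam + 2 = 0
      set a := lam.re with ha
      set b := lam.im with hb
      have hre : a^2 - b^2 + D*a + 2 = 0 := by
        have := congrArg Complex.re h
        simp [pow_two, Complex.mul_re, ← ha, ← hb] at this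
        nlinarith [this]
      have him : 2*a*b + D*b = 0 := by
        have := congrArg Complex.im h
        simp [pow_two, Complex.mul_im, ← ha, ← hb] at this
        nlinarith [this]
      have hb0 : b = 0 := by
        by_contra hb0
        have h2a : 2*a + D = 0 := by
          rcases mul_eq_zero.mp (show b * (2*a + D) = 0 by linarith [him]; ) with h' | h'
          · exact absurd h' hb0
          · exact h'
        nlinarith [hre, h2a, hD8, mul_self_pos.mpr hb0]
      refine ⟨hb0, ?_⟩
      rw [hb0] at hre
      nlinarith
end

section
/- Let D, M, T, k be strictly positive real numbers, let A be the 2×2 complex matrix with rows (-D/M, 1/M) and (-T, 0), let B be the 2×2 complex matrix with rows (1, 0) and (0, T), and define Δ(s) = s·(s + D/M) + T/M, G(s) = (s·I - A)⁻¹·B and Z(s) = I + k·G(s). Then for every real ω, Δ(iω) ≠ 0, and the (0,0) entry of Z(iω) + Z(-iω) is the positive real number 2·((ω² - T/M)² + ω²·(D/M)·(D/M + k)) / ((ω² - T/M)² + ω²·(D/M)²); moreover the (1,1) entry of Z(iω) + Z(-iω) is also a strictly positive real number. -/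
set_option maxHeartbeats 1000000 in

theorem stmt_19 (D M T k : ℝ) (hD : 0 < D) (hM : 0 < M) (hT : 0 < T) (hk : 0 < k) :
    let A : Matrix (Fin 2) (Fin 2) ℂ := !![-(D : ℂ)/(M : ℂ), 1/(M : ℂ); -(T : ℂ), 0]
    let B : Matrix (Fin 2) (Fin 2) ℂ := !![1, 0; 0, (T : ℂ)]
    let Δ : ℂ → ℂ := fun s => s * (s + (D : ℂ) / (M : ℂ)) + (T : ℂ) / (M : ℂ)
    let G : ℂ → Matrix (Fin 2) (Fin 2) ℂ :=
      fun s => (s • (1 : Matrix (Fin 2) (Fin 2) ℂ) - A)⁻¹ * B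
    let Z : ℂ → Matrix (Fin 2) (Fin 2) ℂ :=
      fun s => 1 + (k : ℂ) • G s
    ∀ ω : ℝ,
      Δ (Complex.I * ω) ≠ 0 ∧
      (Z (Complex.I * ω) + Z (-(Complex.I * ω))) 0 0 =
        ((2 * ((ω ^ 2 - T / M) ^ 2 + ω ^ 2 * (D / M) * (D / M + k)) /
          ((ω ^ 2 - T / M) ^ 2 + ω ^ 2 * (D / M) ^ 2) : ℝ) : ℂ) ∧
      0 < 2 * ((ω ^ 2 - T / M) ^ 2 + ω ^ 2 * (D / M) * (D / M + k)) /
          ((ω ^ 2 - T / M) ^ 2 + ω ^ 2 * (D / M) ^ 2) ∧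
      ∃ r : ℝ, 0 < r ∧ (Z (Complex.I * ω) + Z (-(Complex.I * ω))) 1 1 = (r : ℂ) := by
  intro A B Δ G Z ω
  have hMne : (M:ℝ) ≠ 0 := ne_of_gt hM
  have hM0 : (M:ℂ) ≠ 0 := by exact_mod_cast hMne
  obtain ⟨a, ha⟩ : ∃ a : ℝ, a = T/M - ω^2 := ⟨_, rfl⟩
  obtain ⟨b, hb⟩ : ∃ b : ℝ, b = ω*(D/M) := ⟨_, rfl⟩
  have hN : 0 < a^2 + b^2 := by
    rcases eq_or_ne ω 0 with h | h
    · have ha' : 0 < a := by rw [ha, h]; simpa using div_pos hT hM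
      nlinarith [sq_nonneg b]
    · have hb0 : b ≠ 0 := by
        rw [hb]; exact mul_ne_zero h (ne_of_gt (div_pos hD hM))
      have : 0 < b^2 := by positivity
      nlinarith [sq_nonneg a]
  have hΔ1 : Δ (Complex.I * ω) = (a:ℂ) + (b:ℂ)*Complex.I := by
    simp only [Δ]; rw [ha, hb]; push_cast; ring_nf
    try simp [Complex.I_sq]
    try ring
  have hΔ2 : Δ (-(Complex.I * ω)) = (a:ℂ) - (b:ℂ)*Complex.I := by
    simp only [Δ]; rw [ha, hb]; push_cast; ring_nf
    try simp [Complex.I_sq]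
    try ring
  have hprod : ((a:ℂ) + (b:ℂ)*Complex.I) * ((a:ℂ) - (b:ℂ)*Complex.I)
      = ((a^2+b^2 : ℝ) : ℂ) := by
    push_cast; ring_nf
    try simp [Complex.I_sq]
    try ring
  have hNc : ((a^2+b^2 : ℝ) : ℂ) ≠ 0 := by exact_mod_cast ne_of_gt hN
  have hne1 : ((a:ℂ) + (b:ℂ)*Complex.I) ≠ 0 := by
    intro h; rw [h, zero_mul] at hprod; exact hNc hprod.symm
  have hne2 : ((a:ℂ) - (b:ℂ)*Complex.I) ≠ 0 := by
    intro h; rw [h, mul_zero] at hprod; exact hNc hprod.symm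
  have hΔ1ne : Δ (Complex.I * ω) ≠ 0 := by rw [hΔ1]; exact hne1
  have hΔ2ne : Δ (-(Complex.I * ω)) ≠ 0 := by rw [hΔ2]; exact hne2
  -- inverse formula
  have hinv : ∀ s : ℂ, Δ s ≠ 0 →
      (s • (1 : Matrix (Fin 2) (Fin 2) ℂ) - A)⁻¹
        = (Δ s)⁻¹ • !![s, 1/(M:ℂ); -(T:ℂ), s + (D:ℂ)/(M:ℂ)] := by
    intro s hs
    have hsA : s • (1 : Matrix (Fin 2) (Fin 2) ℂ) - A
        = !![s + (D:ℂ)/(M:ℂ), -(1/(M:ℂ)); (T:ℂ), s] := by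
      ext i j
      fin_cases i <;> fin_cases j <;>
        simp [A, Matrix.one_apply] <;> ring
    have hM2 : !![s + (D:ℂ)/(M:ℂ), -(1/(M:ℂ)); (T:ℂ), s]
        * !![s, 1/(M:ℂ); -(T:ℂ), s + (D:ℂ)/(M:ℂ)]
        = Δ s • (1 : Matrix (Fin 2) (Fin 2) ℂ) := by
      ext i j
      fin_cases i <;> fin_cases j
      all_goals simp [Matrix.mul_apply, Fin.sum_univ_two, Matrix.one_apply, Δ, Matrix.smul_apply]
      all_goals try field_simp
      all_goals try ring
    rw [hsA]
    apply Matrix.inv_eq_right_inv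
    rw [Matrix.mul_smul, hM2, smul_smul, inv_mul_cancel₀ hs, one_smul]
  -- G product
  have hGB : ∀ s : ℂ, !![s, 1/(M:ℂ); -(T:ℂ), s + (D:ℂ)/(M:ℂ)] * B
      = !![s, (T:ℂ)/(M:ℂ); -(T:ℂ), (s + (D:ℂ)/(M:ℂ))*(T:ℂ)] := by
    intro s
    ext i j
    fin_cases i <;> fin_cases j <;>
      simp [B, Matrix.mul_apply, Fin.sum_univ_two] <;> ring
  have hZ00 : ∀ s : ℂ, Δ s ≠ 0 → Z s 0 0 = 1 + (k:ℂ) * ((Δ s)⁻¹ * s) := by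
    intro s hs
    show (1 : Matrix (Fin 2) (Fin 2) ℂ) 0 0 + ((k:ℂ) • G s) 0 0 = _
    rw [show G s = (Δ s)⁻¹ • (!![s, 1/(M:ℂ); -(T:ℂ), s + (D:ℂ)/(M:ℂ)] * B) by
      simp only [G, hinv s hs, Matrix.smul_mul]]
    rw [hGB s]
    simp [Matrix.one_apply]
  have hZ11 : ∀ s : ℂ, Δ s ≠ 0 →
      Z s 1 1 = 1 + (k:ℂ) * ((Δ s)⁻¹ * ((s + (D:ℂ)/(M:ℂ))*(T:ℂ))) := by
    intro s hs
    show (1 : Matrix (Fin 2) (Fin 2) ℂ) 1 1 + ((k:ℂ) • G s) 1 1 = _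
    rw [show G s = (Δ s)⁻¹ • (!![s, 1/(M:ℂ); -(T:ℂ), s + (D:ℂ)/(M:ℂ)] * B) by
      simp only [G, hinv s hs, Matrix.smul_mul]]
    rw [hGB s]
    simp [Matrix.one_apply]
  have hNR : ((ω ^ 2 - T / M) ^ 2 + ω ^ 2 * (D / M) ^ 2 : ℝ) ≠ 0 := by
    have h : ((ω ^ 2 - T / M) ^ 2 + ω ^ 2 * (D / M) ^ 2 : ℝ) = a^2 + b^2 := by
      rw [ha, hb]; ring
    rw [h]; exact ne_of_gt hN
  refine ⟨hΔ1ne, ?_, ?_, ?_⟩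
  · -- (0,0) entry
    rw [Matrix.add_apply, hZ00 _ hΔ1ne, hZ00 _ hΔ2ne, hΔ1, hΔ2]
    have hR : (2 * ((ω ^ 2 - T / M) ^ 2 + ω ^ 2 * (D / M) * (D / M + k)) /
          ((ω ^ 2 - T / M) ^ 2 + ω ^ 2 * (D / M) ^ 2) : ℝ)
        = 2 + 2*k*(ω*b)/(a^2+b^2) := by
      have e1 : ((ω^2 - T/M)^2 + ω^2*(D/M)^2 : ℝ) = a^2 + b^2 := by rw [ha, hb]; ring
      have e2 : ((ω^2 - T/M)^2 + ω^2*(D/M)*(D/M+k) : ℝ) = a^2 + b^2 + k*(ω*b) := by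
        rw [ha, hb]; ring
      rw [e1, e2]
      field_simp
    rw [hR]
    have hNc' : ((a:ℂ)^2 + (b:ℂ)^2) ≠ 0 := by
      intro h; apply hNc; push_cast; push_cast at h; linear_combination h
    push_cast
    field_simp [hne1, hne2, hNc']
    ring_nf
    try simp [Complex.I_sq]
    try ring_nf
    try ring
  · -- positivity
    apply div_pos
    · have h : (2 * ((ω ^ 2 - T / M) ^ 2 + ω ^ 2 * (D / M) * (D / M + k)) : ℝ)
          = 2*(a^2 + b^2) + 2*(ω^2 * (D/M) * k) := by rw [ha, hb]; ring
      rw [h]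
      have h2 : (0:ℝ) ≤ ω^2 * (D/M) * k := by positivity
      linarith
    · have h : ((ω ^ 2 - T / M) ^ 2 + ω ^ 2 * (D / M) ^ 2 : ℝ) = a^2 + b^2 := by
        rw [ha, hb]; ring
      rw [h]; exact hN
  · -- (1,1) entry
    refine ⟨2 + 2*k*T*((D/M)*a + ω*b)/(a^2+b^2), ?_, ?_⟩
    · have h : (D/M)*a + ω*b = (D/M)*(T/M) := by rw [ha, hb]; ring
      rw [h]
      have h2 : (0:ℝ) < 2*k*T*((D/M)*(T/M))/(a^2+b^2) := by
        apply div_pos _ hN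
        positivity
      linarith
    · rw [Matrix.add_apply, hZ11 _ hΔ1ne, hZ11 _ hΔ2ne, hΔ1, hΔ2]
      have hNc' : ((a:ℂ)^2 + (b:ℂ)^2) ≠ 0 := by
        intro h; apply hNc; push_cast; push_cast at h; linear_combination h
      push_cast
      field_simp [hne1, hne2, hNc', hM0]
      ring_nf
      try simp [Complex.I_sq]
      try ring_nf
      try ring
end
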